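/- (Full Outer Join lemma, containment direction 2.) Let T1 and T2 be tables with schemas S1 and S2 and common columns C = S1 ∩ S2 with C nonempty. Assume T1 and T2 are each in minimal form and every tuple of T1 and of T2 is non-null on every attribute of C. Then every tuple of β(β((T1 ⋈ T2) ⊎ T1) ⊎ T2) belongs to T1 ⟗ T2. -/
import Mathlib


/- A tuple is a function from attributes to optional values (`none` = null). -/
variable {A V : Type*} [DecidableEq A] [DecidableEq V]

/-- Tuple `t1` subsumes tuple `t2`. -/
def Subsumes (t1 t2 : A → Option V) : Prop :=
  (∀ a, t2 a ≠ none → t1 a = t2 a) ∧ ∃ a, t1 a ≠ none ∧ t2 a = none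

/-- The subsumption operator β: tuples of `T` not subsumed by any tuple of `T`. -/
def beta (T : Set (A → Option V)) : Set (A → Option V) :=
  {t ∈ T | ¬ ∃ t' ∈ T, Subsumes t' t}

/-- Complementary tuples. -/
def Complementary (t1 t2 : A → Option V) : Prop :=
  (∃ a, t1 a = t2 a ∧ t1 a ≠ none) ∧
  (∀ a, t1 a ≠ none → t2 a ≠ none → t1 a = t2 a) ∧
  (∃ a, t1 a ≠ none ∧ t2 a = none) ∧
  (∃ a, t2 a ≠ none ∧ t1 a = none)

/-- The complementation (merge) of two tuples. -/
def mergeT (t1 t2 : A → Option V) : A → Option V :=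
  fun a => match t1 a with
    | some v => some v
    | none => t2 a

/-- A table `T` has schema `S`: every tuple is null outside `S`. -/
def HasSchema (T : Set (A → Option V)) (S : Set A) : Prop :=
  ∀ t ∈ T, ∀ a ∉ S, t a = none

/-- Tuples are joinable on common columns `C`. -/
def Joinable (C : Set A) (t1 t2 : A → Option V) : Prop :=
  ∀ a ∈ C, t1 a = t2 a ∧ t1 a ≠ none

/-- Inner join on common columns `C`. -/
def innerJoin (C : Set A) (T1 T2 : Set (A → Option V)) : Set (A → Option V) :=
  {t | ∃ t1 ∈ T1, ∃ t2 ∈ T2, Joinable C t1 t2 ∧ t = mergeT t1 t2}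

/-- Left outer join on common columns `C`. -/
def leftJoin (C : Set A) (T1 T2 : Set (A → Option V)) : Set (A → Option V) :=
  innerJoin C T1 T2 ∪ {t1 ∈ T1 | ¬ ∃ t2 ∈ T2, Joinable C t1 t2}

/-- Full outer join on common columns `C`. -/
def fullJoin (C : Set A) (T1 T2 : Set (A → Option V)) : Set (A → Option V) :=
  innerJoin C T1 T2 ∪ {t1 ∈ T1 | ¬ ∃ t2 ∈ T2, Joinable C t1 t2}
    ∪ {t2 ∈ T2 | ¬ ∃ t1 ∈ T1, Joinable C t1 t2}

/-- A table is in minimal form: no tuple subsumes another, no two tuples are complementary. -/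
def MinimalForm (T : Set (A → Option V)) : Prop :=
  (∀ t1 ∈ T, ∀ t2 ∈ T, ¬ Subsumes t1 t2) ∧
  (∀ t1 ∈ T, ∀ t2 ∈ T, ¬ Complementary t1 t2)


lemma subsumes_trans {x y z : A → Option V} (h1 : Subsumes x y) (h2 : Subsumes y z) :
    Subsumes x z := by
  obtain ⟨h1a, _⟩ := h1
  obtain ⟨h2a, a, ha1, ha2⟩ := h2
  refine ⟨fun b hb => ?_, a, ?_, ha2⟩
  · rw [h1a b (by rw [h2a b hb]; exact hb), h2a b hb]
  · rw [h1a a ha1]; exact ha1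

lemma subsumes_irrefl (x : A → Option V) : ¬ Subsumes x x := by
  rintro ⟨_, a, h1, h2⟩; exact h1 h2

/-- `mergeT` agrees with the first tuple where it is non-null. -/
lemma mergeT_eq_left {t1 t2 : A → Option V} {a : A} (h : t1 a ≠ none) :
    mergeT t1 t2 a = t1 a := by
  unfold mergeT
  cases hv : t1 a with
  | none => exact absurd hv h
  | some v => rfl

/-- `mergeT` agrees with the second tuple where the first is null. -/
lemma mergeT_eq_right {t1 t2 : A → Option V} {a : A} (h : t1 a = none) :
    mergeT t1 t2 a = t2 a := by
  unfold mergeT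
  rw [h]

/-- In a finite table, every tuple has a subsumer (possibly itself) in β. -/
lemma exists_beta_subsuming {T : Set (A → Option V)} (hT : T.Finite) {m : A → Option V}
    (hm : m ∈ T) : ∃ s ∈ beta T, s = m ∨ Subsumes s m := by
  classical
  set r : (A → Option V) → (A → Option V) → Prop := fun x y => Subsumes x y with hr
  haveI : IsIrrefl (A → Option V) r := ⟨fun x => subsumes_irrefl x⟩
  haveI : IsTrans (A → Option V) r := ⟨fun x y z h1 h2 => subsumes_trans h1 h2⟩
  haveI : IsStrictOrder (A → Option V) r := ⟨⟩
  set U : Set (A → Option V) := {s ∈ T | s = m ∨ Subsumes s m} with hUdef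
  have hU : U.Finite := hT.subset (fun s hs => hs.1)
  have hwf := Set.wellFoundedOn_iff.mp (Set.Finite.wellFoundedOn (r := r) hU)
  obtain ⟨s, hsU, hmin⟩ := hwf.has_min U ⟨m, hm, Or.inl rfl⟩
  refine ⟨s, ⟨hsU.1, ?_⟩, hsU.2⟩
  rintro ⟨s', hs'T, hsub⟩
  have hs'U : s' ∈ U := by
    refine ⟨hs'T, Or.inr ?_⟩
    rcases hsU.2 with h | h
    · rwa [h] at hsub
    · exact subsumes_trans hsub h
  exact hmin s' hs'U ⟨hsub, hs'U, hsU⟩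

/-- Full Outer Join lemma, containment direction 2:
every tuple of `β(β((T1 ⋈ T2) ⊎ T1) ⊎ T2)` belongs to `T1 ⟗ T2`. -/
theorem beta_outerUnion_subset_fullJoin
    (T1 T2 : Set (A → Option V)) (S1 S2 : Set A)
    (hfin1 : T1.Finite) (hfin2 : T2.Finite)
    (hs1 : HasSchema T1 S1) (hs2 : HasSchema T2 S2)
    (hC : (S1 ∩ S2).Nonempty)
    (hmin1 : MinimalForm T1) (hmin2 : MinimalForm T2)
    (hnn1 : ∀ t ∈ T1, ∀ a ∈ S1 ∩ S2, t a ≠ none)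
    (hnn2 : ∀ t ∈ T2, ∀ a ∈ S1 ∩ S2, t a ≠ none) :
    ∀ t ∈ beta (beta (innerJoin (S1 ∩ S2) T1 T2 ∪ T1) ∪ T2),
      t ∈ fullJoin (S1 ∩ S2) T1 T2 := by
  classical
  intro t ht
  obtain ⟨htmem, htnsub⟩ := ht
  have hfinIJ : (innerJoin (S1 ∩ S2) T1 T2 ∪ T1).Finite := by
    refine Set.Finite.union ?_ hfin1
    have : innerJoin (S1 ∩ S2) T1 T2 ⊆
        (fun p : (A → Option V) × (A → Option V) => mergeT p.1 p.2) '' (T1 ×ˢ T2) := by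
      rintro x ⟨t1, ht1, t2, ht2, _, rfl⟩
      exact ⟨(t1, t2), ⟨ht1, ht2⟩, rfl⟩
    exact Set.Finite.subset (Set.Finite.image _ (hfin1.prod hfin2)) this
  rcases htmem with ⟨htIJ1, htnsub1⟩ | ht2
  · -- t ∈ beta (innerJoin ∪ T1)
    rcases htIJ1 with htIJ | htT1
    · exact Or.inl (Or.inl htIJ)
    · -- t ∈ T1
      by_cases hj : ∃ t2 ∈ T2, Joinable (S1 ∩ S2) t t2
      · obtain ⟨t2, ht2, hjoin⟩ := hj
        have hmIJ : mergeT t t2 ∈ innerJoin (S1 ∩ S2) T1 T2 :=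
          ⟨t, htT1, t2, ht2, hjoin, rfl⟩
        have heq : mergeT t t2 = t := by
          funext a
          by_cases hta : t a = none
          · by_contra hne
            apply htnsub1
            refine ⟨mergeT t t2, Or.inl hmIJ, fun b hb => ?_, a, ?_, hta⟩
            · exact mergeT_eq_left hb
            · intro h; apply hne; rw [h]
              exact hta.symm
          · exact mergeT_eq_left hta
        rw [← heq]
        exact Or.inl (Or.inl hmIJ)
      · exact Or.inl (Or.inr ⟨htT1, hj⟩)
  · -- t ∈ T2
    by_cases hj : ∃ t1 ∈ T1, Joinable (S1 ∩ S2) t1 t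
    · obtain ⟨t1, ht1, hjoin⟩ := hj
      have hmIJ : mergeT t1 t ∈ innerJoin (S1 ∩ S2) T1 T2 :=
        ⟨t1, ht1, t, ht2, hjoin, rfl⟩
      have hma : ∀ a, t a ≠ none → mergeT t1 t a = t a := by
        intro a ha
        by_cases hbv : t1 a = none
        · exact mergeT_eq_right hbv
        · have haS1 : a ∈ S1 := by
            by_contra h
            exact absurd (hs1 t1 ht1 a h) hbv
          have haS2 : a ∈ S2 := by
            by_contra h
            exact absurd (hs2 t ht2 a h) ha
          rw [mergeT_eq_left hbv]
          exact (hjoin a ⟨haS1, haS2⟩).1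
      have heq : mergeT t1 t = t := by
        funext a
        by_cases hta : t a = none
        · by_contra hne
          -- mergeT t1 t subsumes t; find a beta-element subsuming t, contradiction
          have hsub : Subsumes (mergeT t1 t) t := ⟨hma, a, fun h => hne (h.trans hta.symm), hta⟩
          obtain ⟨s, hsbeta, hs⟩ := exists_beta_subsuming hfinIJ (Or.inl hmIJ)
          apply htnsub
          refine ⟨s, Or.inl hsbeta, ?_⟩
          rcases hs with rfl | hs
          · exact hsub
          · exact subsumes_trans hs hsub
        · exact hma a hta
      rw [← heq]
      exact Or.inl (Or.inl hmIJ)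
    · exact Or.inr ⟨ht2, hj⟩
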